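/- arXiv:0812.0255 — 4 statements merged into one kernel-verified Lean document; each statement's English description precedes it below -/
import Mathlib

section
/- For any complex number β and natural number n, the integral ∫_{-∞}^{∞} e^{-x²}(x-β)^n dx equals √π · (i/2)^n · H_n(iβ), where H_n is the n-th (physicists') Hermite polynomial. -/
/-!
The Gaussian moments `I_n = ∫ e^{-x²} (x - β)^n dx` satisfy
`I_{n+1} = -β I_n + (n/2) I_{n-1}`: the derivative of the integrable function `e^{-x²} (x - β)^n`
is integrable, so its integral over `ℝ` vanishes. From `H_n' = 2n H_{n-1}` the Hermite recurrence reads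
`H_{n+1}(y) = 2y H_n(y) - 2n H_{n-1}(y)`, and with `(i/2)² = -1/4` it makes `√π (i/2)^n H_n(iβ)`
satisfy the same recurrence. Both start from the Gaussian integral `I_0 = √π`.
-/

open MeasureTheory Polynomial

/-- The physicists' Hermite polynomials, defined by the recurrence
`H_{n+1}(x) = 2 x H_n(x) - H_n'(x)`, `H_0 = 1`. -/
noncomputable def physHermite : ℕ → Polynomial ℤ
  | 0 => 1
  | n + 1 => 2 * (Polynomial.X * physHermite n) - Polynomial.derivative (physHermite n)

theorem physHermite_succ (n : ℕ) :
    physHermite (n + 1) = 2 * (X * physHermite n) - derivative (physHermite n) := rfl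

theorem derivative_physHermite_succ (n : ℕ) :
    derivative (physHermite (n + 1)) = 2 * (n + 1 : ℤ[X]) * physHermite n := by
  induction n with
  | zero => simp [physHermite]
  | succ n ih =>
    rw [physHermite_succ (n + 1), derivative_sub, ih]
    simp only [derivative_mul, derivative_add, derivative_natCast, derivative_ofNat,
      derivative_one, derivative_X, ih]
    rw [physHermite_succ n]
    push_cast
    ring

theorem derivative_physHermite (n : ℕ) :
    derivative (physHermite n) = 2 * (n : ℤ[X]) * physHermite (n - 1) := by
  cases n with
  | zero => simp [physHermite]
  | succ n => simpa using derivative_physHermite_succ n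

theorem aeval_physHermite_succ {A : Type*} [CommRing A] (y : A) (n : ℕ) :
    aeval y (physHermite (n + 1)) =
      2 * y * aeval y (physHermite n) - 2 * n * aeval y (physHermite (n - 1)) := by
  rw [physHermite_succ, derivative_physHermite]
  simp only [map_sub, map_mul, map_ofNat, aeval_X, map_natCast]
  ring

section GaussianMoments

open Complex

noncomputable def gaussianMoment (β : ℂ) (n : ℕ) : ℂ :=
  ∫ x : ℝ, cexp (-(x : ℂ) ^ 2) * ((x : ℂ) - β) ^ n

theorem integrable_ofReal_pow_mul_cexp_neg_sq (k : ℕ) :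
    Integrable (fun x : ℝ => (x : ℂ) ^ k * cexp (-(x : ℂ) ^ 2)) := by
  have h := (integrable_rpow_mul_exp_neg_mul_sq one_pos
    (neg_one_lt_zero.trans_le k.cast_nonneg)).ofReal (𝕜 := ℂ)
  refine h.congr (Filter.Eventually.of_forall fun x => ?_)
  simp [Real.rpow_natCast, ofReal_exp]

theorem integrable_cexp_neg_sq_mul_sub_pow (β : ℂ) (n : ℕ) :
    Integrable (fun x : ℝ => cexp (-(x : ℂ) ^ 2) * ((x : ℂ) - β) ^ n) := by
  simp_rw [sub_eq_add_neg, add_pow, Finset.mul_sum]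
  refine integrable_finsetSum _ fun k _ => ?_
  exact ((integrable_ofReal_pow_mul_cexp_neg_sq k).mul_const ((-β) ^ (n - k) * n.choose k)).congr
    (.of_forall fun x => by ring)

theorem hasDerivAt_cexp_neg_sq_mul_sub_pow (β : ℂ) (n : ℕ) (x : ℝ) :
    HasDerivAt (fun y : ℝ => cexp (-(y : ℂ) ^ 2) * ((y : ℂ) - β) ^ n)
      (cexp (-(x : ℂ) ^ 2) * (n * ((x : ℂ) - β) ^ (n - 1) - 2 * x * ((x : ℂ) - β) ^ n)) x := by
  have hexp : HasDerivAt (fun z : ℂ => cexp (-z ^ 2)) (cexp (-(x : ℂ) ^ 2) * -(2 * x)) x := by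
    simpa using ((hasDerivAt_pow 2 (x : ℂ)).neg).cexp
  have hpow : HasDerivAt (fun z : ℂ => (z - β) ^ n) (n * ((x : ℂ) - β) ^ (n - 1)) x := by
    simpa using ((hasDerivAt_id (x : ℂ)).sub_const β).fun_pow n
  convert (hexp.fun_mul hpow).comp_ofReal using 1
  ring

-- At `n = 0` the truncated index `n - 1` is harmless: its coefficient `n` vanishes.
theorem gaussianMoment_succ (β : ℂ) (n : ℕ) :
    gaussianMoment β (n + 1) = -β * gaussianMoment β n + n / 2 * gaussianMoment β (n - 1) := by
  set F : ℕ → ℝ → ℂ := fun m x => cexp (-(x : ℂ) ^ 2) * ((x : ℂ) - β) ^ m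
  have hF : ∀ m, Integrable (F m) := integrable_cexp_neg_sq_mul_sub_pow β
  have hderiv : ∀ x, HasDerivAt (F n) (n * F (n - 1) x - 2 * F (n + 1) x - 2 * β * F n x) x := by
    intro x
    convert hasDerivAt_cexp_neg_sq_mul_sub_pow β n x using 1
    simp only [F]
    ring
  have hzero : (n : ℂ) * gaussianMoment β (n - 1) - 2 * gaussianMoment β (n + 1)
      - 2 * β * gaussianMoment β n = 0 := by
    rw [← integral_eq_zero_of_hasDerivAt_of_integrable hderiv (by fun_prop) (hF n),
      integral_sub, integral_sub, integral_const_mul, integral_const_mul, integral_const_mul]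
    · rfl
    all_goals fun_prop
  linear_combination -hzero / 2

theorem gaussianMoment_zero (β : ℂ) : gaussianMoment β 0 = Real.sqrt Real.pi := by
  calc gaussianMoment β 0 = ∫ x : ℝ, ((Real.exp (-1 * x ^ 2) : ℝ) : ℂ) := by
        simp [gaussianMoment, ofReal_exp]
    _ = Real.sqrt Real.pi := by rw [integral_complex_ofReal, integral_gaussian, div_one]

end GaussianMoments

/-- For any complex `β` and natural `n`,
`∫_{-∞}^{∞} e^{-x²} (x - β)^n dx = √π (i/2)^n H_n(iβ)`. -/
theorem hermite_integral (β : ℂ) (n : ℕ) :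
    ∫ x : ℝ, Complex.exp (-(x : ℂ) ^ 2) * ((x : ℂ) - β) ^ n
      = (Real.sqrt Real.pi : ℂ) * (Complex.I / 2) ^ n *
        Polynomial.aeval (Complex.I * β) (physHermite n) := by
  change gaussianMoment β n = _
  induction n using Nat.twoStepInduction with
  | zero => simp [gaussianMoment_zero, physHermite]
  | one =>
    rw [gaussianMoment_succ, aeval_physHermite_succ, gaussianMoment_zero]
    simp only [physHermite, map_one, Nat.cast_zero]
    linear_combination (-(Real.sqrt Real.pi : ℂ) * β) * Complex.I_sq
  | more n ih₀ ih₁ =>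
    rw [gaussianMoment_succ, aeval_physHermite_succ, Nat.add_sub_cancel, ih₀, ih₁]
    push_cast
    linear_combination (Real.sqrt Real.pi : ℂ) * (Complex.I / 2) ^ n *
      ((n + 1) / 2 * aeval (Complex.I * β) (physHermite n)
        - Complex.I / 2 * β * aeval (Complex.I * β) (physHermite (n + 1))) * Complex.I_sq
end

section
/- The two-particle scaling function defined by the double integral f_2(α) = (−1/(2π)) ∫_{−∞}^{∞} du_1 ∫_{u_1}^{∞} du_2 ∫_0^{∞} dν e^{−u_1²/2} e^{−(u_2+ν)²/2 − αν} (u_1 − (u_2+ν)) equals e^{α²} Erfc(α) for all real α. -/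
/-!
After `u₂ = u₁ + s` the integrand is `-e^{-αν} (s+ν) e^{-u₁²/2} e^{-(u₁+s+ν)²/2}`, of constant
sign on the domain, so integrability can be read off from the iterated integrals themselves and
the order of integration is free. Integrating `u₁` first is a Gaussian convolution, giving
`√π e^{-(s+ν)²/4}`; then `∫_{s>0} (s+ν) e^{-(s+ν)²/4} ds = 2 e^{-ν²/4}`, and completing the square,
`e^{-αν-ν²/4} = e^{α²} e^{-(ν/2+α)²}`, turns the last integral over `ν > 0` into
`2 e^{α²} ∫_α^∞ e^{-x²} dx`.
-/

open MeasureTheory Real Set Filter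

section Fubini

variable {α β : Type*} [MeasurableSpace α] [MeasurableSpace β] {μ : Measure α} {ν : Measure β}
  [SFinite μ] [SFinite ν]

theorem integrable_prod_of_nonneg {f : α × β → ℝ} (hf : AEStronglyMeasurable f (μ.prod ν))
    (h_nonneg : ∀ᵐ y ∂ν, ∀ᵐ x ∂μ, 0 ≤ f (x, y))
    (h_slice : ∀ᵐ y ∂ν, Integrable (fun x => f (x, y)) μ)
    (h_int : Integrable (fun y => ∫ x, f (x, y) ∂μ) ν) : Integrable f (μ.prod ν) := by
  refine (integrable_prod_iff' hf).2 ⟨h_slice, h_int.congr ?_⟩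
  filter_upwards [h_nonneg] with y hy
  exact integral_congr_ae (hy.mono fun x hx => (Real.norm_of_nonneg hx).symm)

end Fubini

theorem integral_comp_add_right_Ioi {E : Type*} [NormedAddCommGroup E] [NormedSpace ℝ E]
    (g : ℝ → E) (a b : ℝ) : ∫ x in Ioi a, g (x + b) = ∫ x in Ioi (a + b), g x := by
  rw [← integral_indicator measurableSet_Ioi, ← integral_indicator measurableSet_Ioi,
    ← integral_add_right_eq_self ((Ioi (a + b)).indicator g) b]
  congr 1
  ext x
  simp only [indicator_apply, mem_Ioi, add_lt_add_iff_right]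

theorem integral_Ioi_mul_exp_neg_mul_sq {b : ℝ} (hb : 0 < b) (a : ℝ) :
    ∫ x in Ioi a, x * exp (-b * x ^ 2) = exp (-b * a ^ 2) / (2 * b) := by
  have h_deriv (x : ℝ) :
      HasDerivAt (fun x => -exp (-b * x ^ 2) / (2 * b)) (x * exp (-b * x ^ 2)) x := by
    refine (((hasDerivAt_pow 2 x).const_mul (-b)).exp.fun_neg.div_const (2 * b)).congr_deriv ?_
    field_simp
    ring
  have h_lim : Tendsto (fun x => -exp (-b * x ^ 2) / (2 * b)) atTop (nhds 0) := by
    have := tendsto_exp_atBot.comp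
      ((tendsto_pow_atTop two_ne_zero).const_mul_atTop_of_neg (neg_lt_zero.2 hb))
    simpa using this.neg.div_const (2 * b)
  rw [integral_Ioi_of_hasDerivAt_of_tendsto' (fun x _ => h_deriv x)
    (integrable_mul_exp_neg_mul_sq hb).integrableOn h_lim]
  ring

theorem exp_neg_sq_div_two_mul_exp_neg_add_sq_div_two (u c : ℝ) :
    exp (-u ^ 2 / 2) * exp (-(u + c) ^ 2 / 2) =
      exp (-c ^ 2 / 4) * exp (-1 * (u + c / 2) ^ 2) := by
  rw [← exp_add, ← exp_add]
  ring_nf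

theorem integrable_exp_neg_sq_div_two_mul_exp_neg_add_sq_div_two (c : ℝ) :
    Integrable fun u => exp (-u ^ 2 / 2) * exp (-(u + c) ^ 2 / 2) := by
  simp_rw [exp_neg_sq_div_two_mul_exp_neg_add_sq_div_two]
  exact ((integrable_exp_neg_mul_sq one_pos).comp_add_right (c / 2)).const_mul _

theorem integral_exp_neg_sq_div_two_mul_exp_neg_add_sq_div_two (c : ℝ) :
    ∫ u, exp (-u ^ 2 / 2) * exp (-(u + c) ^ 2 / 2) = √π * exp (-c ^ 2 / 4) := by
  simp_rw [exp_neg_sq_div_two_mul_exp_neg_add_sq_div_two, integral_const_mul]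
  rw [integral_add_right_eq_self (fun u => exp (-1 * u ^ 2)), integral_gaussian, div_one,
    mul_comm]

theorem exp_neg_mul_mul_exp_neg_sq_div_four (α ν : ℝ) :
    exp (-(α * ν)) * exp (-ν ^ 2 / 4) = exp (α ^ 2) * exp (-1 * (2⁻¹ * ν + α) ^ 2) := by
  rw [← exp_add, ← exp_add]
  ring_nf

theorem integrable_exp_neg_mul_mul_exp_neg_sq_div_four (α : ℝ) :
    Integrable fun ν => exp (-(α * ν)) * exp (-ν ^ 2 / 4) := by
  simp_rw [exp_neg_mul_mul_exp_neg_sq_div_four]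
  exact (((integrable_exp_neg_mul_sq one_pos).comp_add_right α).comp_mul_left'
    (inv_ne_zero two_ne_zero)).const_mul _

theorem integral_Ioi_exp_neg_mul_mul_exp_neg_sq_div_four (α : ℝ) :
    ∫ ν in Ioi 0, exp (-(α * ν)) * exp (-ν ^ 2 / 4) =
      2 * exp (α ^ 2) * ∫ x in Ioi α, exp (-x ^ 2) := by
  simp_rw [exp_neg_mul_mul_exp_neg_sq_div_four, integral_const_mul]
  rw [integral_comp_mul_left_Ioi (fun x => exp (-1 * (x + α) ^ 2)) 0 (inv_pos.2 two_pos),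
    mul_zero, integral_comp_add_right_Ioi (fun x => exp (-1 * x ^ 2)), zero_add, inv_inv,
    smul_eq_mul]
  simp only [neg_mul, one_mul]
  ring

theorem integral_Ioi_add_mul_exp_neg_add_sq_div_four (ν : ℝ) :
    ∫ s in Ioi 0, (s + ν) * exp (-(s + ν) ^ 2 / 4) = 2 * exp (-ν ^ 2 / 4) := by
  have h_quarter (w : ℝ) : -w ^ 2 / 4 = -(1 / 4) * w ^ 2 := by ring
  simp_rw [h_quarter]
  rw [integral_comp_add_right_Ioi (fun w => w * exp (-(1 / 4) * w ^ 2)), zero_add,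
    integral_Ioi_mul_exp_neg_mul_sq (by norm_num)]
  ring

/-- Minus the integrand of `f₂` after the substitution `u₂ = u + s`. -/
noncomputable def f₂Integrand (α u s ν : ℝ) : ℝ :=
  exp (-(α * ν)) * ((s + ν) * (exp (-u ^ 2 / 2) * exp (-(u + (s + ν)) ^ 2 / 2)))

theorem integrable_f₂Integrand (α s ν : ℝ) : Integrable fun u => f₂Integrand α u s ν :=
  ((integrable_exp_neg_sq_div_two_mul_exp_neg_add_sq_div_two (s + ν)).const_mul _).const_mul _

theorem integral_f₂Integrand (α s ν : ℝ) :
    ∫ u, f₂Integrand α u s ν = √π * (exp (-(α * ν)) * ((s + ν) * exp (-(s + ν) ^ 2 / 4))) := by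
  simp only [f₂Integrand, integral_const_mul,
    integral_exp_neg_sq_div_two_mul_exp_neg_add_sq_div_two]
  ring

theorem integral_Ioi_integral_f₂Integrand (α ν : ℝ) :
    ∫ s in Ioi 0, ∫ u, f₂Integrand α u s ν = 2 * √π * (exp (-(α * ν)) * exp (-ν ^ 2 / 4)) := by
  simp_rw [integral_f₂Integrand, integral_const_mul,
    integral_Ioi_add_mul_exp_neg_add_sq_div_four]
  ring

theorem integrable_integral_f₂Integrand (α : ℝ) :
    Integrable (fun p : ℝ × ℝ => ∫ u, f₂Integrand α u p.1 p.2)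
      ((volume.restrict (Ioi 0)).prod (volume.restrict (Ioi 0))) := by
  refine integrable_prod_of_nonneg ?_ ?_ (ae_of_all _ fun ν => ?_) ?_
  · simp_rw [integral_f₂Integrand]
    exact Continuous.aestronglyMeasurable (by fun_prop)
  · filter_upwards [ae_restrict_mem measurableSet_Ioi] with ν hν
    filter_upwards [ae_restrict_mem measurableSet_Ioi] with s hs
    rw [integral_f₂Integrand]
    have := add_pos (mem_Ioi.1 hs) (mem_Ioi.1 hν)
    positivity
  · have h_quarter (w : ℝ) : -w ^ 2 / 4 = -(1 / 4) * w ^ 2 := by ring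
    simp_rw [integral_f₂Integrand, h_quarter]
    exact ((((integrable_mul_exp_neg_mul_sq (by norm_num)).comp_add_right ν).const_mul
      _).const_mul _).restrict
  · simp_rw [integral_Ioi_integral_f₂Integrand]
    exact ((integrable_exp_neg_mul_mul_exp_neg_sq_div_four α).const_mul _).restrict

theorem integrable_prod_f₂Integrand (α : ℝ) :
    Integrable (fun q : ℝ × ℝ × ℝ => f₂Integrand α q.1 q.2.1 q.2.2)
      (volume.prod ((volume.restrict (Ioi 0)).prod (volume.restrict (Ioi 0)))) := by
  refine integrable_prod_of_nonneg
    (Continuous.aestronglyMeasurable (by unfold f₂Integrand; fun_prop)) ?_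
    (ae_of_all _ fun p => integrable_f₂Integrand α p.1 p.2)
    (integrable_integral_f₂Integrand α)
  rw [Measure.prod_restrict]
  filter_upwards [ae_restrict_mem (measurableSet_Ioi.prod measurableSet_Ioi)] with p hp
  refine ae_of_all _ fun u => ?_
  have := add_pos (mem_Ioi.1 hp.1) (mem_Ioi.1 hp.2)
  unfold f₂Integrand
  positivity

theorem integral_f₂Integrand_comm (α : ℝ) :
    ∫ u, ∫ s in Ioi 0, ∫ ν in Ioi 0, f₂Integrand α u s ν =
      ∫ ν in Ioi 0, ∫ s in Ioi 0, ∫ u, f₂Integrand α u s ν := by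
  have h_int := integrable_prod_f₂Integrand α
  calc ∫ u, ∫ s in Ioi 0, ∫ ν in Ioi 0, f₂Integrand α u s ν
      = ∫ u, ∫ p, f₂Integrand α u p.1 p.2
          ∂((volume.restrict (Ioi (0 : ℝ))).prod (volume.restrict (Ioi (0 : ℝ)))) :=
        integral_congr_ae (h_int.prod_right_ae.mono fun u hu => (integral_prod _ hu).symm)
    _ = ∫ p, (∫ u, f₂Integrand α u p.1 p.2)
          ∂((volume.restrict (Ioi (0 : ℝ))).prod (volume.restrict (Ioi (0 : ℝ)))) :=
        integral_integral_swap h_int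
    _ = ∫ ν in Ioi 0, ∫ s in Ioi 0, ∫ u, f₂Integrand α u s ν :=
        integral_prod_symm _ (integrable_integral_f₂Integrand α)

theorem integral_Ioi_integral_Ioi_eq_neg_f₂Integrand (α u₁ : ℝ) :
    ∫ u₂ in Ioi u₁, ∫ ν in Ioi (0 : ℝ),
        exp (-u₁ ^ 2 / 2) * (exp (-(u₂ + ν) ^ 2 / 2 - α * ν) * (u₁ - (u₂ + ν))) =
      -∫ s in Ioi 0, ∫ ν in Ioi 0, f₂Integrand α u₁ s ν := by
  rw [← integral_neg, show Ioi u₁ = Ioi (0 + u₁) by rw [zero_add],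
    ← integral_comp_add_right_Ioi]
  refine setIntegral_congr_fun measurableSet_Ioi fun s _ => ?_
  rw [← integral_neg]
  congr 1
  ext ν
  rw [f₂Integrand, sub_eq_add_neg, exp_add]
  ring_nf

/-- The two-particle SVW scaling integral equals `e^{α²} Erfc(α)`:
`(-1/(2π)) ∫_{-∞}^∞ du₁ ∫_{u₁}^∞ du₂ ∫_0^∞ dν
   e^{-u₁²/2} e^{-(u₂+ν)²/2 - αν} (u₁ - (u₂+ν)) = e^{α²} Erfc(α)`. -/
theorem f₂_integral_formula (α : ℝ) :
    (-1 / (2 * Real.pi)) *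
      ∫ u₁ : ℝ, ∫ u₂ in Set.Ioi u₁, ∫ ν in Set.Ioi (0 : ℝ),
        Real.exp (-u₁ ^ 2 / 2) *
          (Real.exp (-(u₂ + ν) ^ 2 / 2 - α * ν) * (u₁ - (u₂ + ν)))
      = Real.exp (α ^ 2) *
        (2 / Real.sqrt Real.pi * ∫ x in Set.Ioi α, Real.exp (-x ^ 2)) := by
  simp_rw [integral_Ioi_integral_Ioi_eq_neg_f₂Integrand, integral_neg, integral_f₂Integrand_comm,
    integral_Ioi_integral_f₂Integrand, integral_const_mul,
    integral_Ioi_exp_neg_mul_mul_exp_neg_sq_div_four]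
  field_simp
  rw [sq_sqrt pi_pos.le]
end

section
/- Define g_{i,j}(x;κ) = (1/2πi) ∮_{C_0} (κ + κξ − 1)^{i−1} (1+ξ)^x / ξ^j dξ (contour around 0). For the equidistant initial configuration x_m^0 − x_i^0 = a(m−i) with a a positive integer, det[g_{i,j}(a(m−i); κ)]_{1≤i,j≤m} = (a + κ − aκ)^{m(m−1)/2}. -/
/-!
Row `i` of the matrix holds the coefficients of `u^i w^(n-i)`, where `u = κ(1+ξ) - 1`,
`w = (1+ξ)^a` and `n = m - 1`. Adding `binom(i,k) r^(i-k)` times row `k` to row `i` for every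
`k < i` (a unimodular row operation) replaces row `i` by `(u + r w)^i w^(n-i)`. For
`r = 1 - κ` the polynomial `u + r w` vanishes at `ξ = 0` with linear coefficient
`κ + a(1 - κ)`, so the new matrix is upper triangular with diagonal `(a + κ - aκ)^i`.
-/

open Polynomial Finset

section
variable {R : Type*} [CommRing R]

theorem Polynomial.det_of_coeff_X_pow_mul {m : ℕ} (q : ℕ → R[X]) :
    (Matrix.of fun i j : Fin m => (X ^ (i : ℕ) * q i).coeff j).det =
      ∏ i : Fin m, (q i).coeff 0 := by
  rw [Matrix.det_of_isUpperTriangular]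
  · refine prod_congr rfl fun i _ => ?_
    simpa using coeff_X_pow_mul (q i) i 0
  · intro i j (hji : j < i)
    simp [coeff_X_pow_mul', not_le.mpr hji]

theorem Matrix.mul_of_coeff {l n o : Type*} [Fintype n] (A : Matrix l n R) (p : n → R[X])
    (e : o → ℕ) :
    A * Matrix.of (fun k j => (p k).coeff (e j)) =
      Matrix.of fun i j => (∑ k, C (A i k) * p k).coeff (e j) := by
  ext i j
  simp [Matrix.mul_apply]

/-- Lower unitriangular, since `Nat.choose i k = 0` for `i < k`. -/
def binomialMatrix (m : ℕ) (r : R) : Matrix (Fin m) (Fin m) R :=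
  Matrix.of fun i k => ((i : ℕ).choose k : R) * r ^ ((i : ℕ) - k)

theorem det_binomialMatrix (m : ℕ) (r : R) : (binomialMatrix m r).det = 1 := by
  rw [Matrix.det_of_isLowerTriangular]
  · simp [binomialMatrix]
  · intro i k (hik : i < k)
    simp [binomialMatrix, Nat.choose_eq_zero_of_lt (Fin.lt_def.mp hik)]

theorem sum_choose_mul_pow_mul_pow (u w : R[X]) (r : R) {i n : ℕ} (hi : i ≤ n) :
    ∑ k ∈ range (i + 1), C ((i.choose k : R) * r ^ (i - k)) * (u ^ k * w ^ (n - k)) =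
      (u + C r * w) ^ i * w ^ (n - i) := by
  rw [add_pow, sum_mul]
  refine sum_congr rfl fun k hk => ?_
  have hki : k ≤ i := Nat.lt_succ_iff.mp (mem_range.mp hk)
  rw [show n - k = (i - k) + (n - i) by omega, pow_add, mul_pow, C_mul, C_pow, ← C_eq_natCast]
  ring

theorem binomialMatrix_mul_of_coeff_pow_mul_pow (m : ℕ) (u w : R[X]) (r : R) :
    binomialMatrix m r * Matrix.of (fun i j : Fin m => (u ^ (i : ℕ) * w ^ (m - 1 - i)).coeff j) =
      Matrix.of fun i j : Fin m => ((u + C r * w) ^ (i : ℕ) * w ^ (m - 1 - i)).coeff j := by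
  rw [Matrix.mul_of_coeff (p := fun k : Fin m => u ^ (k : ℕ) * w ^ (m - 1 - k))]
  ext i j
  simp only [Matrix.of_apply, binomialMatrix]
  rw [← sum_choose_mul_pow_mul_pow u w r (by omega : (i : ℕ) ≤ m - 1)]
  rw [Fin.sum_univ_eq_sum_range
    (fun k => C (((i : ℕ).choose k : R) * r ^ ((i : ℕ) - k)) * (u ^ k * w ^ (m - 1 - k)))]
  refine congrArg (coeff · j)
    (sum_subset (range_subset_range.mpr (by omega)) fun k _ hk => ?_).symm
  rw [Nat.choose_eq_zero_of_lt (by simpa using hk)]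
  simp

theorem det_of_coeff_pow_mul_pow (m : ℕ) (u w : R[X]) (r : R)
    (h0 : (u + C r * w).coeff 0 = 0) :
    (Matrix.of fun i j : Fin m => (u ^ (i : ℕ) * w ^ (m - 1 - i)).coeff j).det =
      ∏ i : Fin m, (u + C r * w).coeff 1 ^ (i : ℕ) * w.coeff 0 ^ (m - 1 - i) := by
  have hX : u + C r * w = X * (u + C r * w).divX := by
    simpa [h0] using (X_mul_divX_add (u + C r * w)).symm
  rw [← one_mul (Matrix.det _), ← det_binomialMatrix m r, ← Matrix.det_mul,
    binomialMatrix_mul_of_coeff_pow_mul_pow]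
  conv_lhs => rw [hX]
  simp_rw [mul_pow, mul_assoc]
  rw [det_of_coeff_X_pow_mul fun i => (u + C r * w).divX ^ i * w ^ (m - 1 - i)]
  simp only [coeff_zero_eq_eval_zero, eval_mul, eval_pow, ← coeff_divX]

end

theorem det_g_equidistant_general (m a : ℕ) (κ : ℂ) :
    Matrix.det (Matrix.of fun i j : Fin m =>
        ((Polynomial.C κ * (1 + Polynomial.X) - 1) ^ i.val *
            (1 + Polynomial.X) ^ (a * (m - 1 - i.val))).coeff j.val)
      = ((a : ℂ) + κ - (a : ℂ) * κ) ^ (m * (m - 1) / 2) := by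
  have h0 : (C κ * (1 + X) - 1 + C (1 - κ) * (1 + X) ^ a).coeff 0 = 0 := by
    simp [coeff_one_add_X_pow]
  have h1 : (C κ * (1 + X) - 1 + C (1 - κ) * (1 + X) ^ a).coeff 1 = a + κ - a * κ := by
    simp only [map_sub, map_one, sub_mul, one_mul, coeff_add, coeff_sub, coeff_C_mul, coeff_one,
      one_ne_zero, ↓reduceIte, coeff_X_one, zero_add, mul_one, sub_zero, coeff_one_add_X_pow,
      Nat.choose_one_right]
    ring
  simp_rw [pow_mul]
  rw [det_of_coeff_pow_mul_pow m _ _ _ h0, h1]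
  simp [coeff_one_add_X_pow, prod_pow_eq_pow_sum, Fin.sum_univ_eq_sum_range (fun i => i),
    sum_range_id]

/-- `g_{i,j}(x;κ)` is the coefficient of `ξ^{j-1}` in `(κ + κξ - 1)^{i-1} (1+ξ)^x`.
For the equidistant initial configuration `x_m^0 - x_i^0 = a(m-i)` (with `a ≥ 1`),
`det[g_{i,j}(a(m-i);κ)] = (a + κ - aκ)^{m(m-1)/2}`.  Indices `i, j : Fin m` are
0-based, so `i-1 ↦ i.val`, `j-1 ↦ j.val`, and `m - i ↦ m - 1 - i.val`. -/
theorem det_g_equidistant (m a : ℕ) (ha : 1 ≤ a) (κ : ℂ) :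
    Matrix.det (Matrix.of fun i j : Fin m =>
        ((Polynomial.C κ * (1 + Polynomial.X) - 1) ^ i.val *
            (1 + Polynomial.X) ^ (a * (m - 1 - i.val))).coeff j.val)
      = ((a : ℂ) + κ - (a : ℂ) * κ) ^ (m * (m - 1) / 2) :=
  det_g_equidistant_general m a κ
end

section
/- For κ > 1 real and integers x_1^0 < ⋯ < x_m^0, the iterated contour integral ∏_{k=1}^m ∮_{|ξ_k|=r} (dξ_k/2πi) · ξ_k^{x_m^0 − x_k^0} / ((ξ_k − κ^{−1})^{m−k}(ξ_k − κ^{m−1})) · ∏_{1≤i<j≤m}(ξ_j − ξ_i), with r > κ^{m−1}, equals (−1)^{m(m−1)/2} κ^{∑_{k=1}^{m−1}(x_k^0 − x_m^0)}. -/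
/-!
Replace `ξ ↦ ξ ^ (x_m⁰ - x_k⁰)` by arbitrary entire functions `f_k` and the poles `κ⁻¹`,
`κ^(m-1)` by arbitrary points `a`, `b` inside the circle; the integral is then
`(2πi)^m (-1)^(m(m-1)/2) f_m(b) ∏_{k<m} f_k(a)`, proved by induction on `m`.
Integrating out `ξ_1` last, the inner integral has the same shape in `m - 1` variables, with
the Vandermonde factors `ξ_l - ξ_1` absorbed into the numerators. By induction it equals a
constant times `(b - ξ_1)(a - ξ_1)^(m-2)`, which cancels every pole of `ξ_1` except a simple
one at `a`, and Cauchy's formula finishes.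
-/

open MeasureTheory Finset Complex Metric

noncomputable def vandermondeIntegrand {J : ℕ} (a b : ℂ) (f : Fin J → ℂ → ℂ) (z : Fin J → ℂ) :
    ℂ :=
  (∏ l, f l (z l) / ((z l - a) ^ (J - 1 - l.val) * (z l - b))) *
    ∏ i, ∏ l ∈ Ioi i, (z l - z i)

theorem Differentiable.circleIntegral_div_sub {c p : ℂ} {r : ℝ} {f : ℂ → ℂ}
    (hf : Differentiable ℂ f) (hp : p ∈ ball c r) :
    (∮ z in C(c, r), f z / (z - p)) = 2 * Real.pi * I * f p :=
  circleIntegral_div_sub_of_differentiable_on_off_countable Set.countable_empty hp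
    hf.continuous.continuousOn fun z _ => hf z

theorem circleMap_ne_of_mem_ball {c p : ℂ} {r : ℝ} (hp : p ∈ ball c r) (θ : ℝ) :
    circleMap c r θ ≠ p :=
  fun h => circleMap_notMem_ball c r θ (h ▸ hp)

theorem torusIntegrable_vandermondeIntegrand {J : ℕ} {c a b : ℂ} {r : ℝ}
    (ha : a ∈ ball c r) (hb : b ∈ ball c r) {f : Fin J → ℂ → ℂ}
    (hf : ∀ l, Continuous (f l)) :
    TorusIntegrable (vandermondeIntegrand a b f) (fun _ => c) (fun _ => r) := by
  have hcont : Continuous fun θ : Fin J → ℝ =>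
      vandermondeIntegrand a b f (fun l => circleMap c r (θ l)) := by
    have hz : ∀ l, Continuous fun θ : Fin J → ℝ => circleMap c r (θ l) := fun l =>
      (continuous_circleMap c r).comp (continuous_apply l)
    refine .mul (continuous_finsetProd _ fun l _ => .div ((hf l).comp (hz l)) (by fun_prop)
      fun θ => mul_ne_zero (pow_ne_zero _ ?_) ?_) (by fun_prop)
    · exact sub_ne_zero.2 (circleMap_ne_of_mem_ball ha _)
    · exact sub_ne_zero.2 (circleMap_ne_of_mem_ball hb _)
  exact hcont.continuousOn.integrableOn_compact isCompact_Icc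

theorem Fin.prod_Ioi_sub_cons {R : Type*} [CommRing R] {n : ℕ} (ξ : R) (y : Fin n → R) :
    ∏ i : Fin (n + 1), ∏ l ∈ Ioi i,
        ((Fin.cons ξ y : Fin (n + 1) → R) l - (Fin.cons ξ y : Fin (n + 1) → R) i) =
      (∏ l, (y l - ξ)) * ∏ i, ∏ l ∈ Ioi i, (y l - y i) := by
  simp [Fin.prod_univ_succ, Fin.prod_Ioi_succ]

theorem vandermondeIntegrand_cons {J : ℕ} (a b : ℂ) (f : Fin (J + 2) → ℂ → ℂ) (ξ : ℂ)
    (y : Fin (J + 1) → ℂ) :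
    vandermondeIntegrand a b f (Fin.cons ξ y) =
      f 0 ξ / ((ξ - a) ^ (J + 1) * (ξ - b)) *
        vandermondeIntegrand a b (fun l z => f l.succ z * (z - ξ)) y := by
  have hexp : ∀ l : Fin (J + 1), J + 2 - 1 - (l.val + 1) = J + 1 - 1 - l.val := fun l => by omega
  rw [vandermondeIntegrand, vandermondeIntegrand, Fin.prod_Ioi_sub_cons, Fin.prod_univ_succ]
  simp only [Fin.cons_zero, Fin.cons_succ, Fin.val_zero, Fin.val_succ, hexp,
    mul_div_right_comm _ (_ - ξ), prod_mul_distrib, show J + 2 - 1 - 0 = J + 1 by omega]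
  ring

theorem div_mul_sub_pow_mul_sub {ξ a b : ℂ} (ha : ξ ≠ a) (hb : ξ ≠ b) (u : ℂ) (n : ℕ) :
    u / ((ξ - a) ^ (n + 1) * (ξ - b)) * ((b - ξ) * (a - ξ) ^ n) =
      (-1) ^ (n + 1) * (u / (ξ - a)) := by
  rw [← sub_ne_zero] at ha hb
  rw [← neg_sub ξ b, ← neg_sub ξ a, neg_pow]
  field_simp
  ring

theorem Monotone.sum_erase_last_sub {J : ℕ} {x : Fin (J + 1) → ℤ} (hx : Monotone x) :
    ∑ k ∈ univ.erase (Fin.last J), (x k - x (Fin.last J)) =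
      -((∑ l : Fin J, (x (Fin.last J) - x l.castSucc).toNat : ℕ) : ℤ) := by
  rw [sum_erase _ (sub_self _), Fin.sum_univ_castSucc, sub_self, add_zero]
  push_cast
  rw [← sum_neg_distrib]
  refine sum_congr rfl fun l _ => ?_
  rw [Int.toNat_of_nonneg (sub_nonneg.2 (hx (Fin.le_last _)))]
  ring

theorem setIntegral_pi_Ioc_eq_torusIntegral {n : ℕ} (g : (Fin n → ℂ) → ℂ) (c : Fin n → ℂ)
    (R : Fin n → ℝ) :
    ∫ θ in Set.univ.pi (fun _ => Set.Ioc (0 : ℝ) (2 * Real.pi)),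
        (∏ k, deriv (circleMap (c k) (R k)) (θ k)) * g (fun k => circleMap (c k) (R k) (θ k)) =
      ∯ z in T(c, R), g z := by
  rw [torusIntegral, volume_pi, setIntegral_congr_set Measure.univ_pi_Ioc_ae_eq_Icc]
  refine setIntegral_congr_fun measurableSet_Icc fun θ _ => ?_
  simp only [deriv_circleMap, circleMap, zero_add, smul_eq_mul]
  rfl

theorem torusIntegral_vandermondeIntegrand {c a b : ℂ} {r : ℝ} (ha : a ∈ ball c r)
    (hb : b ∈ ball c r) :
    ∀ {J : ℕ} (f : Fin (J + 1) → ℂ → ℂ), (∀ l, Differentiable ℂ (f l)) →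
      (∯ z in T(fun _ => c, fun _ => r), vandermondeIntegrand a b f z) =
        (2 * Real.pi * I) ^ (J + 1) * (-1) ^ ((J + 1) * (J + 1 - 1) / 2) * f (Fin.last J) b *
          ∏ l : Fin J, f l.castSucc a
  | 0, f, hf => by
    rw [torusIntegral_dim1]
    simpa [vandermondeIntegrand] using (hf 0).circleIntegral_div_sub hb
  | J + 1, f, hf => by
    set K := (2 * Real.pi * I) ^ (J + 1) * (-1) ^ ((J + 1) * (J + 1 - 1) / 2) *
      f (Fin.last (J + 1)) b *
      ∏ l : Fin J, f l.succ.castSucc a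
    have hinner (ξ : ℂ) :
        (∯ y in T(fun _ => c, fun _ => r),
            vandermondeIntegrand a b (fun l z => f l.succ z * (z - ξ)) y) =
          K * ((b - ξ) * (a - ξ) ^ J) := by
      rw [torusIntegral_vandermondeIntegrand ha hb (fun l z => f l.succ z * (z - ξ))
        fun l => (hf l.succ).mul (differentiable_id.sub_const ξ)]
      simp only [K, prod_mul_distrib, prod_const, card_univ, Fintype.card_fin, Fin.succ_last,
        Fin.succ_castSucc]
      ring
    have hpole : Set.EqOn
        (fun ξ => f 0 ξ / ((ξ - a) ^ (J + 1) * (ξ - b)) *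
          ∯ y in T(fun _ => c, fun _ => r),
            vandermondeIntegrand a b (fun l z => f l.succ z * (z - ξ)) y)
        (fun ξ => (-1) ^ (J + 1) * K * (f 0 ξ / (ξ - a))) (sphere c r) := fun ξ hξ => by
      have hcancel := div_mul_sub_pow_mul_sub (sphere_disjoint_ball.ne_of_mem hξ ha)
        (sphere_disjoint_ball.ne_of_mem hξ hb) (f 0 ξ) J
      simp only [hinner]
      linear_combination K * hcancel
    rw [torusIntegral_succ (torusIntegrable_vandermondeIntegrand ha hb fun l => (hf l).continuous)]
    simp only [vandermondeIntegrand_cons, torusIntegral_const_mul, Function.comp_def]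
    rw [circleIntegral.integral_congr (pos_of_mem_ball ha).le hpole,
      circleIntegral.integral_const_mul, (hf 0).circleIntegral_div_sub ha, Fin.prod_univ_succ,
      Nat.triangle_succ (J + 1)]
    simp only [K, Fin.castSucc_zero]
    ring

/-- For real `κ > 1` and integers `x₁⁰ < ⋯ < x_m⁰`, the iterated contour integral
`∏_{k=1}^m ∮_{|ξ_k|=r} (dξ_k/2πi) ξ_k^{x_m⁰-x_k⁰} /((ξ_k-κ⁻¹)^{m-k}(ξ_k-κ^{m-1}))
  · ∏_{i<j}(ξ_j-ξ_i)` with `r > κ^{m-1}` equals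
`(-1)^{m(m-1)/2} κ^{∑_{k=1}^{m-1}(x_k⁰ - x_m⁰)}`.  The `m` contour integrals are
written as a single integral over the torus, parametrizing `ξ_k = circleMap 0 r (θ k)`,
each contour contributing the factor `(d/dθ) circleMap = i ξ_k` and a `1/(2πi)`. -/
theorem iterated_contour_integral (m : ℕ) (hm : 0 < m) (κ : ℝ) (hκ : 1 < κ)
    (x : Fin m → ℤ) (hx : StrictMono x) (r : ℝ) (hr : κ ^ (m - 1) < r) :
    (1 / (2 * Real.pi * Complex.I)) ^ m *
      ∫ θ in Set.univ.pi (fun _ : Fin m => Set.Ioc (0 : ℝ) (2 * Real.pi)),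
        (∏ k : Fin m, deriv (circleMap 0 r) (θ k)) *
          ((∏ k : Fin m,
              (circleMap 0 r (θ k)) ^ ((x ⟨m - 1, by omega⟩ - x k).toNat) /
                ((circleMap 0 r (θ k) - (κ : ℂ)⁻¹) ^ (m - 1 - k.val) *
                  (circleMap 0 r (θ k) - (κ : ℂ) ^ (m - 1)))) *
            ∏ i : Fin m, ∏ j ∈ Finset.Ioi i, (circleMap 0 r (θ j) - circleMap 0 r (θ i)))
      = (-1 : ℂ) ^ (m * (m - 1) / 2) *
          (κ : ℂ) ^ (∑ k ∈ Finset.univ.erase (⟨m - 1, by omega⟩ : Fin m),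
            (x k - x ⟨m - 1, by omega⟩)) := by
  obtain ⟨J, rfl⟩ : ∃ J, m = J + 1 := ⟨m - 1, by omega⟩
  have hlast : (⟨J + 1 - 1, by omega⟩ : Fin (J + 1)) = Fin.last J := rfl
  simp only [hlast]
  have hκ0 : 0 < κ := one_pos.trans hκ
  have ha : (κ : ℂ)⁻¹ ∈ ball (0 : ℂ) r := by
    rw [mem_ball_zero_iff, norm_inv, norm_real, Real.norm_of_nonneg hκ0.le]
    exact ((inv_lt_one_of_one_lt₀ hκ).trans_le (one_le_pow₀ hκ.le)).trans hr
  have hb : (κ : ℂ) ^ (J + 1 - 1) ∈ ball (0 : ℂ) r := by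
    rwa [mem_ball_zero_iff, norm_pow, norm_real, Real.norm_of_nonneg hκ0.le]
  calc _ = (1 / (2 * Real.pi * I)) ^ (J + 1) *
        ∯ z in T(fun _ => 0, fun _ => r),
          vandermondeIntegrand (κ : ℂ)⁻¹ ((κ : ℂ) ^ (J + 1 - 1))
            (fun k ξ => ξ ^ (x (Fin.last J) - x k).toNat) z :=
        congrArg _ (setIntegral_pi_Ioc_eq_torusIntegral _ _ _)
    _ = _ := by
      rw [torusIntegral_vandermondeIntegrand ha hb _ fun k => differentiable_pow _,
        hx.monotone.sum_erase_last_sub,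
        zpow_neg, zpow_natCast, ← inv_pow, ← prod_pow_eq_pow_sum]
      simp only [sub_self, Int.toNat_zero, pow_zero, mul_one]
      rw [one_div, inv_pow, ← mul_assoc, ← mul_assoc,
        inv_mul_cancel₀ (pow_ne_zero _ two_pi_I_ne_zero), one_mul]
end
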